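/- arXiv:2303.11451 — 4 statements merged into one kernel-verified Lean document; each statement's English description precedes it below -/
import Mathlib

section
/- If the index poset I is bqo and each poset P_i (i ∈ I, each with least element 0_i) is bqo, then the Dress–Schiffels product ⊗^{DS}_{i∈I} P_i is bqo. -/
universe u v

open Set

/-- `r` is an initial segment of `X ⊆ ℕ`: `r ⊆ X` and every element of `X` not in `r`
is greater than every element of `r`. -/
def NatInitSeg (r : Finset ℕ) (X : Set ℕ) : Prop :=
  ↑r ⊆ X ∧ ∀ x ∈ X, x ∉ r → ∀ y ∈ r, y < x

/-- `B` is a barrier: an infinite inclusion-antichain of finite subsets of `ℕ` such that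
every infinite subset of the base has an initial segment in `B`. -/
def IsBarrier (B : Set (Finset ℕ)) : Prop :=
  B.Infinite ∧
  (∀ x ∈ B, ∀ y ∈ B, x ⊆ y → x = y) ∧
  (∀ X : Set ℕ, X ⊆ (⋃ b ∈ B, (↑b : Set ℕ)) → X.Infinite → ∃ r ∈ B, NatInitSeg r X)

/-- `t` is a proper initial segment of the finite set `s`. -/
def FinsetProperInitSeg (t s : Finset ℕ) : Prop :=
  t ⊆ s ∧ t ≠ s ∧ ∀ x ∈ s, x ∉ t → ∀ y ∈ t, y < x

/-- The shift-extension relation `r ◁ s`: `min r < min s` and `r \ {min r}` is a proper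
initial segment of `s`. -/
def ShiftExt (r s : Finset ℕ) : Prop :=
  ∃ m ∈ r, (∀ x ∈ r, m ≤ x) ∧ (∀ y ∈ s, m < y) ∧ FinsetProperInitSeg (r.erase m) s

/-- A map `f` from a barrier `B` into `X` is good for the relation `le`. -/
def GoodOn {X : Type*} (le : X → X → Prop) (B : Set (Finset ℕ)) (f : Finset ℕ → X) : Prop :=
  ∃ s ∈ B, ∃ t ∈ B, ShiftExt s t ∧ le (f s) (f t)

/-- Well quasi-order for a relation: every `ℕ`-sequence is good. -/
def IsWqoRel {X : Type*} (le : X → X → Prop) : Prop :=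
  ∀ p : ℕ → X, ∃ i j : ℕ, i < j ∧ le (p i) (p j)

/-- Better quasi-order: every map from every barrier is good. -/
def IsBqoRel {X : Type*} (le : X → X → Prop) : Prop :=
  ∀ B : Set (Finset ℕ), IsBarrier B → ∀ f : Finset ℕ → X, GoodOn le B f

/-- The (strict) lexicographic order on finite subsets of `ℕ`:
`r < s` iff `r ≠ s` and the least element of the symmetric difference belongs to `r`. -/
def FinsetLexLt (r s : Finset ℕ) : Prop :=
  r ≠ s ∧ ∀ m ∈ symmDiff r s, (∀ x ∈ symmDiff r s, m ≤ x) → m ∈ r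

/-- The barrier `B` has lexicographic order type `≤ α`: there is a lex-strictly-increasing
ordinal-valued function on `B` bounded by `α`. -/
def BarrierTypeLE (B : Set (Finset ℕ)) (α : Ordinal.{0}) : Prop :=
  ∃ g : Finset ℕ → Ordinal.{0}, (∀ b ∈ B, g b < α) ∧
    ∀ b₁ ∈ B, ∀ b₂ ∈ B, FinsetLexLt b₁ b₂ → g b₁ < g b₂

/-- `α`-wqo: every map from a barrier of order type `≤ α` is good. -/
def IsAlphaWqoRel {X : Type*} (le : X → X → Prop) (α : Ordinal.{0}) : Prop :=
  ∀ B : Set (Finset ℕ), IsBarrier B → BarrierTypeLE B α →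
    ∀ f : Finset ℕ → X, GoodOn le B f

/-- `σ`-bqo: a wqo which is a countable union of sets, each bqo in the induced order. -/
def IsSigmaBqoRel {X : Type*} (le : X → X → Prop) : Prop :=
  IsWqoRel le ∧
  ∃ S : ℕ → Set X, (⋃ n, S n) = Set.univ ∧
    ∀ n, IsBqoRel (fun x y : S n => le x.1 y.1)

/-- Sequences of length `α` from `P`. -/
abbrev OrdSeq (P : Type u) (α : Ordinal.{0}) := {β : Ordinal.{0} // β < α} → P

/-- The embeddability quasi-order on `P^α`. -/
def OrdSeqLE {P : Type u} [Preorder P] {α : Ordinal.{0}} (f g : OrdSeq P α) : Prop :=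
  ∃ ρ : {β : Ordinal.{0} // β < α} → {β : Ordinal.{0} // β < α},
    StrictMono ρ ∧ ∀ γ, f γ ≤ g (ρ γ)

/-- Sequences of length `< α` from `P`. -/
abbrev OrdSeqLt (P : Type u) (α : Ordinal.{0}) :=
  Σ β : {β : Ordinal.{0} // β < α}, ({γ : Ordinal.{0} // γ < β.1} → P)

/-- The embeddability quasi-order on `P^{<α}`. -/
def OrdSeqLtLE {P : Type u} [Preorder P] {α : Ordinal.{0}} (f g : OrdSeqLt P α) : Prop :=
  ∃ ρ : {γ : Ordinal.{0} // γ < f.1.1} → {γ : Ordinal.{0} // γ < g.1.1},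
    StrictMono ρ ∧ ∀ δ, f.2 δ ≤ g.2 (ρ δ)

/-- The Dress–Schiffels relation: `f ≤DS g` iff `f i < g i` for every `i` maximal in
`Δ(f,g) = {j | f j ≠ g j}`. -/
def DSle {I : Type u} [PartialOrder I] {P : I → Type v} [∀ i, PartialOrder (P i)]
    (f g : ∀ i, P i) : Prop :=
  ∀ i : I, Maximal (fun j => f j ≠ g j) i → f i < g i

/-- The underlying set of the Dress–Schiffels product: finitely supported functions. -/
abbrev DSProd (I : Type u) [PartialOrder I] (P : I → Type v) [∀ i, PartialOrder (P i)]
    [∀ i, OrderBot (P i)] :=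
  {f : ∀ i, P i // {i | f i ≠ ⊥}.Finite}

/-!
Suppose `f : B → ⊗ P_i` is bad. For every shift pair `s ◁ t` of `B` choose `χ (s ∪ t) ∈ I`
maximal in `Δ(f s, f t)` with `f s ≰ f t` there; `χ` lives on the barrier `B²` of such unions.
Since `I` is bqo, after shrinking to an infinite `M` we get `χ u ≤ χ v` for all shift pairs
`u ◁ v` of `B²` inside `M`, and by the Nash-Williams partition theorem, applied to `(B²)²`,
either `χ u = χ v` for all of them or `χ u ≠ χ v` for all of them.
In the first case `χ` is constant, say `= i`, and `b ↦ f b i` is a bad map into `P_i`.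
In the second case the canonical chain `b₀ ◁ b₁ ◁ ⋯` of `B` inside `M` gives strictly increasing
indices `iₘ = χ (bₘ ∪ bₘ₊₁)`; by maximality `f b₀ iₘ = f bₘ iₘ ≠ 0` for all `m`, so `f b₀` does
not have finite support.
-/

namespace Barrier

def base (B : Set (Finset ℕ)) : Set ℕ := ⋃ b ∈ B, (↑b : Set ℕ)

def restrict (B : Set (Finset ℕ)) (M : Set ℕ) : Set (Finset ℕ) := {b ∈ B | ↑b ⊆ M}

def above (s : Finset ℕ) (M : Set ℕ) : Set ℕ := {x ∈ M | ∀ y ∈ s, y < x}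

def tail (X : Set ℕ) : Set ℕ := X \ {sInf X}

open Classical in
noncomputable def seg (B : Set (Finset ℕ)) (X : Set ℕ) : Finset ℕ :=
  if h : ∃ r ∈ B, NatInitSeg r X then h.choose else ∅

-- the barrier `B²` of the bqo literature
def pairs (B : Set (Finset ℕ)) : Set (Finset ℕ) :=
  {u | ∃ s ∈ B, ∃ t ∈ B, ShiftExt s t ∧ u = s ∪ t}

def OnShiftPairs (B : Set (Finset ℕ)) (R : Finset ℕ → Finset ℕ → Prop) : Prop :=
  ∀ s ∈ B, ∀ t ∈ B, ShiftExt s t → R s t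

variable {B : Set (Finset ℕ)} {M N X Y T : Set ℕ} {s t : Finset ℕ} {a x : ℕ}

theorem subset_base (hs : s ∈ B) : (↑s : Set ℕ) ⊆ base B :=
  subset_biUnion_of_mem (u := fun b : Finset ℕ => (↑b : Set ℕ)) hs

theorem restrict_mono (h : M ⊆ N) : restrict B M ⊆ restrict B N := fun _ hb => ⟨hb.1, hb.2.trans h⟩

theorem base_pairs_subset : base (pairs B) ⊆ base B := by
  refine iUnion₂_subset ?_
  rintro _ ⟨s, hs, t, ht, -, rfl⟩
  simpa only [Finset.coe_union] using union_subset (subset_base hs) (subset_base ht)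

theorem union_mem_restrict_pairs (hs : s ∈ restrict B M) (ht : t ∈ restrict B M)
    (hst : ShiftExt s t) : s ∪ t ∈ restrict (pairs B) M :=
  ⟨⟨s, hs.1, t, ht.1, hst, rfl⟩, by simpa only [Finset.coe_union] using union_subset hs.2 ht.2⟩

theorem above_mono (h : M ⊆ N) : above s M ⊆ above s N := fun _ hx => ⟨h hx.1, hx.2⟩

theorem above_anti {s' : Finset ℕ} (h : s ⊆ s') : above s' M ⊆ above s M :=
  fun _ hx => ⟨hx.1, fun y hy => hx.2 y (h hy)⟩

theorem above_above : above s (above s M) = above s M :=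
  Subset.antisymm (sep_subset _ _) fun _ hx => ⟨hx, hx.2⟩

theorem infinite_above (hM : M.Infinite) (s : Finset ℕ) : (above s M).Infinite :=
  (hM.sdiff (finite_Iic (s.sup id))).mono fun _ hx =>
    ⟨hx.1, fun _ hy => (Finset.le_sup (f := id) hy).trans_lt (not_le.1 hx.2)⟩

theorem natInitSeg_union (hT : T ⊆ above s M) : NatInitSeg s (↑s ∪ T) :=
  ⟨subset_union_left, fun _ hx hxs y hy => (hx.resolve_left hxs |> hT).2 y hy⟩

theorem tail_subset : tail X ⊆ X := sdiff_subset

theorem sInf_lt_of_mem_tail (hx : x ∈ tail X) : sInf X < x :=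
  (Nat.sInf_le hx.1).lt_of_ne (Ne.symm hx.2)

theorem infinite_tail (hX : X.Infinite) : (tail X).Infinite := hX.sdiff (finite_singleton _)

theorem tail_insert (h : ∀ y ∈ Y, a < y) : tail (insert a Y) = Y := by
  have hmin : sInf (insert a Y) = a :=
    le_antisymm (Nat.sInf_le (mem_insert a Y))
      (le_csInf (insert_nonempty a Y) (forall_mem_insert.2 ⟨le_rfl, fun y hy => (h y hy).le⟩))
  rw [tail, hmin, insert_sdiff_self_of_notMem fun ha => lt_irrefl a (h a ha)]

theorem iterate_tail_subset (m : ℕ) : tail^[m] X ⊆ X := by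
  induction m with
  | zero => exact subset_rfl
  | succ m ih => rw [Function.iterate_succ_apply']; exact tail_subset.trans ih

theorem infinite_iterate_tail (hX : X.Infinite) (m : ℕ) : (tail^[m] X).Infinite := by
  induction m with
  | zero => exact hX
  | succ m ih => rw [Function.iterate_succ_apply']; exact infinite_tail ih

end Barrier

open Barrier

section InitialSegments

variable {B : Set (Finset ℕ)} {X : Set ℕ} {r s t s' t' : Finset ℕ}

theorem NatInitSeg.subset_or_subset (hr : NatInitSeg r X) (hs : NatInitSeg s X) :
    r ⊆ s ∨ s ⊆ r := by
  by_contra! h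
  obtain ⟨a, ha, has⟩ := Finset.not_subset.1 h.1
  obtain ⟨b, hb, hbr⟩ := Finset.not_subset.1 h.2
  exact lt_asymm (hr.2 b (hs.1 hb) hbr a ha) (hs.2 a (hr.1 ha) has b hb)

theorem NatInitSeg.sInf_mem (h : NatInitSeg r X) (hr : r.Nonempty) : sInf X ∈ r := by
  obtain ⟨y, hy⟩ := hr
  by_contra hm
  exact (Nat.sInf_le (h.1 hy)).not_gt (h.2 _ (Nat.sInf_mem ⟨y, h.1 hy⟩) hm y hy)

theorem NatInitSeg.erase_sInf (h : NatInitSeg r X) : NatInitSeg (r.erase (sInf X)) (tail X) := by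
  refine ⟨fun x hx => ?_, fun x hx hxr y hy => ?_⟩
  · obtain ⟨hxm, hxr⟩ := Finset.mem_erase.1 hx
    exact ⟨h.1 hxr, hxm⟩
  · exact h.2 x hx.1 (fun hxr' => hxr (Finset.mem_erase.2 ⟨hx.2, hxr'⟩)) y
      (Finset.mem_of_mem_erase hy)

theorem NatInitSeg.union_tail {r' : Finset ℕ} (hr : NatInitSeg r X) (hm : sInf X ∈ r)
    (hr' : NatInitSeg r' (tail X)) : NatInitSeg (r ∪ r') X := by
  refine ⟨by simpa only [Finset.coe_union] using union_subset hr.1 (hr'.1.trans tail_subset),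
    fun x hx hxu y hy => ?_⟩
  simp only [Finset.mem_union, not_or] at hxu hy
  rcases hy with hy | hy
  · exact hr.2 x hx hxu.1 y hy
  · exact hr'.2 x ⟨hx, fun hxm => hxu.1 (hxm ▸ hm)⟩ hxu.2 y hy

theorem IsAntichain.eq_of_natInitSeg (hB : IsAntichain (· ⊆ ·) B) (hr : r ∈ B) (hs : s ∈ B)
    (hrX : NatInitSeg r X) (hsX : NatInitSeg s X) : r = s :=
  (hrX.subset_or_subset hsX).elim (hB.eq hr hs) fun h => (hB.eq hs hr h).symm

theorem Barrier.seg_spec (h : ∃ r ∈ B, NatInitSeg r X) : seg B X ∈ B ∧ NatInitSeg (seg B X) X := by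
  classical
  rw [seg, dif_pos h]
  exact h.choose_spec

theorem IsAntichain.seg_eq (hB : IsAntichain (· ⊆ ·) B) (hr : r ∈ B) (hrX : NatInitSeg r X) :
    seg B X = r :=
  have h := seg_spec ⟨r, hr, hrX⟩
  hB.eq_of_natInitSeg h.1 hr h.2 hrX

theorem ShiftExt.exists_union_eq_insert (h : ShiftExt s t) :
    ∃ m ∈ s, (∀ y ∈ t, m < y) ∧ s ∪ t = insert m t := by
  obtain ⟨m, hm, -, hlt, hsub, -⟩ := h
  refine ⟨m, hm, hlt, Finset.Subset.antisymm ?_ ?_⟩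
  · refine Finset.union_subset (fun x hx => ?_) (Finset.subset_insert m t)
    by_cases hxm : x = m
    · exact hxm ▸ Finset.mem_insert_self m t
    · exact Finset.mem_insert_of_mem (hsub (Finset.mem_erase.2 ⟨hxm, hx⟩))
  · exact Finset.insert_subset (Finset.mem_union_left t hm) Finset.subset_union_right

theorem ShiftExt.natInitSeg_union (h : ShiftExt s t) : NatInitSeg s ↑(s ∪ t) := by
  obtain ⟨m, hm, -, hlt, -, -, hseg⟩ := h
  refine ⟨by simp, fun x hx hxs y hy => ?_⟩
  have hxt : x ∈ t := (Finset.mem_union.1 hx).resolve_left hxs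
  by_cases hym : y = m
  · exact hym ▸ hlt x hxt
  · exact hseg x hxt (fun hx' => hxs (Finset.mem_of_mem_erase hx')) y
      (Finset.mem_erase.2 ⟨hym, hy⟩)

theorem ShiftExt.eq_of_union_eq (hB : IsAntichain (· ⊆ ·) B) (hs : s ∈ B) (hs' : s' ∈ B)
    (h : ShiftExt s t) (h' : ShiftExt s' t') (heq : s ∪ t = s' ∪ t') : s = s' ∧ t = t' := by
  obtain ⟨m, hm, hlt, hu⟩ := h.exists_union_eq_insert
  obtain ⟨m', hm', hlt', hu'⟩ := h'.exists_union_eq_insert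
  have hmm' : m = m' := by
    rw [hu, hu'] at heq
    have h1 : m ∈ insert m' t' := heq ▸ Finset.mem_insert_self m t
    have h2 : m' ∈ insert m t := heq ▸ Finset.mem_insert_self m' t'
    exact le_antisymm ((Finset.mem_insert.1 h2).elim ge_of_eq fun h => (hlt m' h).le)
      ((Finset.mem_insert.1 h1).elim ge_of_eq fun h => (hlt' m h).le)
  subst hmm'
  have htt' : t = t' := by
    rw [← Finset.erase_insert fun hm => lt_irrefl m (hlt m hm),
      ← Finset.erase_insert fun hm => lt_irrefl m (hlt' m hm), ← hu, ← hu', heq]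
  subst htt'
  exact ⟨hB.eq_of_natInitSeg hs hs' h.natInitSeg_union (heq ▸ h'.natInitSeg_union), rfl⟩

end InitialSegments

section Barriers

variable {B : Set (Finset ℕ)} {M X : Set ℕ} {r s : Finset ℕ}

theorem IsBarrier.isAntichain (hB : IsBarrier B) : IsAntichain (· ⊆ ·) B :=
  fun x hx y hy hne h => hne (hB.2.1 x hx y hy h)

theorem IsBarrier.exists_natInitSeg (hB : IsBarrier B) (hX : X ⊆ base B) (hXi : X.Infinite) :
    ∃ r ∈ B, NatInitSeg r X :=
  hB.2.2 X hX hXi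

theorem IsBarrier.empty_notMem (hB : IsBarrier B) : ∅ ∉ B := fun h => by
  obtain ⟨b, hb, hb0⟩ := (hB.1.sdiff (finite_singleton ∅)).nonempty
  exact hb0 (hB.isAntichain.eq h hb (Finset.empty_subset b)).symm

theorem IsBarrier.nonempty_of_mem (hB : IsBarrier B) (hs : s ∈ B) : s.Nonempty :=
  Finset.nonempty_iff_ne_empty.2 fun h => hB.empty_notMem (h ▸ hs)

theorem IsBarrier.base_infinite (hB : IsBarrier B) : (base B).Infinite := fun h =>
  hB.1 ((h.finite_subsets.preimage Finset.coe_injective.injOn).subset fun _ => subset_base)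

theorem IsBarrier.shiftExt_of_natInitSeg (hB : IsBarrier B) (hr : r ∈ B) (hrX : NatInitSeg r X)
    (hs : s ∈ B) (hsX : NatInitSeg s (tail X)) : ShiftExt r s := by
  have hm : sInf X ∈ r := hrX.sInf_mem (hB.nonempty_of_mem hr)
  have hlt : ∀ y ∈ s, sInf X < y := fun y hy => sInf_lt_of_mem_tail (hsX.1 hy)
  have hsr : ¬ s ⊆ r := fun h => lt_irrefl _ (hlt _ (hB.isAntichain.eq hs hr h ▸ hm))
  have herase := hrX.erase_sInf
  refine ⟨sInf X, hm, fun x hx => Nat.sInf_le (hrX.1 hx), hlt, ?_, ?_, ?_⟩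
  · exact (herase.subset_or_subset hsX).resolve_right fun h =>
      hsr (h.trans (Finset.erase_subset _ _))
  · exact fun h => hsr (h ▸ Finset.erase_subset _ _)
  · exact fun x hx hxr y hy => herase.2 x (hsX.1 hx) hxr y hy

theorem IsBarrier.exists_shiftExt (hB : IsBarrier B) : ∃ s ∈ B, ∃ t ∈ B, ShiftExt s t := by
  have hX := hB.base_infinite
  obtain ⟨hr, hrX⟩ := seg_spec (hB.exists_natInitSeg subset_rfl hX)
  obtain ⟨hs, hsX⟩ := seg_spec (hB.exists_natInitSeg tail_subset (infinite_tail hX))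
  exact ⟨_, hr, _, hs, hB.shiftExt_of_natInitSeg hr hrX hs hsX⟩

theorem isBarrier_of_forall_natInitSeg (hM : M.Infinite) (hbase : base B ⊆ M) (hempty : ∅ ∉ B)
    (hB : IsAntichain (· ⊆ ·) B) (hseg : ∀ X ⊆ M, X.Infinite → ∃ r ∈ B, NatInitSeg r X) :
    IsBarrier B := by
  refine ⟨fun hfin => ?_, fun x hx y hy h => hB.eq hx hy h,
    fun X hX hXi => hseg X (hX.trans hbase) hXi⟩
  -- a finite `B` has a finite base, and the rest of `M` has no initial segment in `B`
  have hfin' : (base B).Finite := hfin.biUnion fun b _ => b.finite_toSet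
  obtain ⟨r, hr, hrX⟩ := hseg _ sdiff_subset (hM.sdiff hfin')
  have : r = ∅ := Finset.coe_eq_empty.1 <|
    subset_empty_iff.1 fun x hx => (hrX.1 hx).2 (subset_base hr hx)
  exact hempty (this ▸ hr)

theorem isBarrier_restrict (hB : IsBarrier B) (hM : M ⊆ base B) (hMi : M.Infinite) :
    IsBarrier (restrict B M) := by
  refine isBarrier_of_forall_natInitSeg hMi (iUnion₂_subset fun _ hb => hb.2)
    (fun h => hB.empty_notMem h.1) (hB.isAntichain.subset fun _ hb => hb.1) fun X hX hXi => ?_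
  obtain ⟨hr, hrX⟩ := seg_spec (hB.exists_natInitSeg (hX.trans hM) hXi)
  exact ⟨_, ⟨hr, hrX.1.trans hX⟩, hrX⟩

theorem isAntichain_pairs (hB : IsAntichain (· ⊆ ·) B) : IsAntichain (· ⊆ ·) (pairs B) := by
  rintro _ ⟨s, hs, t, ht, hst, rfl⟩ _ ⟨s', -, t', ht', hst', rfl⟩ hne hsub
  obtain ⟨m, hm, hlt, hu⟩ := hst.exists_union_eq_insert
  obtain ⟨m', -, hlt', hu'⟩ := hst'.exists_union_eq_insert
  rw [hu, hu'] at hsub hne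
  have hmt : m ∉ t := fun h => lt_irrefl m (hlt m h)
  rcases Finset.mem_insert.1 (hsub (Finset.mem_insert_self m t)) with rfl | hmt'
  · -- equal minima: then `t ⊆ t'`, so `t = t'`
    refine hne (congrArg _ (hB.eq ht ht' fun x hx => ?_))
    exact (Finset.mem_insert.1 (hsub (Finset.mem_insert_of_mem hx))).resolve_left
      fun h => hmt (h ▸ hx)
  · -- `m' < m`: then `s ∪ t ⊆ t'`, so `s = t' = t`, but `m ∈ s \ t`
    have hgt : ∀ x ∈ insert m t, m' < x := fun x hx =>
      (Finset.mem_insert.1 hx).elim (fun h => h ▸ hlt' m hmt') fun hx =>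
        (hlt' m hmt').trans (hlt x hx)
    have hsub' : insert m t ⊆ t' := fun x hx =>
      (Finset.mem_insert.1 (hsub hx)).resolve_left (hgt x hx).ne'
    have hst : s ⊆ t' := (hu ▸ Finset.subset_union_left).trans hsub'
    have htt : t ⊆ t' := (Finset.subset_insert m t).trans hsub'
    exact hmt ((hB.eq ht ht' htt).trans (hB.eq hs ht' hst).symm ▸ hm)

theorem isBarrier_pairs (hB : IsBarrier B) : IsBarrier (pairs B) := by
  refine isBarrier_of_forall_natInitSeg hB.base_infinite base_pairs_subset ?_
    (isAntichain_pairs hB.isAntichain) ?_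
  · rintro ⟨s, hs, t, -, -, h⟩
    exact hB.empty_notMem (Finset.subset_empty.1 (h ▸ Finset.subset_union_left) ▸ hs)
  · intro X hX hXi
    obtain ⟨hr, hrX⟩ := seg_spec (hB.exists_natInitSeg hX hXi)
    obtain ⟨hs, hsX⟩ := seg_spec (hB.exists_natInitSeg (tail_subset.trans hX) (infinite_tail hXi))
    exact ⟨_, ⟨_, hr, _, hs, hB.shiftExt_of_natInitSeg hr hrX hs hsX, rfl⟩,
      hrX.union_tail (hrX.sInf_mem (hB.nonempty_of_mem hr)) hsX⟩

theorem IsBarrier.exists_onShiftPairs_union {α : Type*} (hB : IsBarrier B)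
    {R : Finset ℕ → Finset ℕ → α → Prop} (h : OnShiftPairs B fun s t => ∃ a, R s t a) :
    ∃ χ : Finset ℕ → α, OnShiftPairs B fun s t => R s t (χ (s ∪ t)) := by
  have : Nonempty α := by
    obtain ⟨s, hs, t, ht, hst⟩ := hB.exists_shiftExt
    exact ⟨(h s hs t ht hst).choose⟩
  have hu : ∀ u, ∃ a, OnShiftPairs B fun s t => u = s ∪ t → R s t a := by
    intro u
    by_cases hu : ∃ s ∈ B, ∃ t ∈ B, ShiftExt s t ∧ u = s ∪ t
    · obtain ⟨s, hs, t, ht, hst, rfl⟩ := hu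
      obtain ⟨a, ha⟩ := h s hs t ht hst
      refine ⟨a, fun s' hs' t' _ hst' heq => ?_⟩
      obtain ⟨rfl, rfl⟩ := hst.eq_of_union_eq hB.isAntichain hs hs' hst' heq
      exact ha
    · exact ⟨Classical.arbitrary α, fun s hs t ht hst heq => (hu ⟨s, hs, t, ht, hst, heq⟩).elim⟩
  choose χ hχ using hu
  exact ⟨χ, fun s hs t ht hst => hχ _ s hs t ht hst rfl⟩

end Barriers

namespace Barrier

section Fusion

variable {Φ : Finset ℕ → Set ℕ → Prop}

theorem exists_infinite_subset_forall_mem (hmono : ∀ s ⦃M M' : Set ℕ⦄, M' ⊆ M → Φ s M → Φ s M')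
    (hex : ∀ s (M : Set ℕ), M.Infinite → ∃ M' ⊆ M, M'.Infinite ∧ Φ s M')
    (L : Finset (Finset ℕ)) {M : Set ℕ} (hM : M.Infinite) :
    ∃ M' ⊆ M, M'.Infinite ∧ ∀ s ∈ L, Φ s M' := by
  induction L using Finset.induction_on generalizing M with
  | empty => exact ⟨M, subset_rfl, hM, by simp⟩
  | insert s L _ ih =>
    obtain ⟨M₁, h₁, hM₁, hΦ₁⟩ := ih hM
    obtain ⟨M₂, h₂, hM₂, hΦ₂⟩ := hex s M₁ hM₁
    exact ⟨M₂, h₂.trans h₁, hM₂, Finset.forall_mem_insert _ _ _ |>.2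
      ⟨hΦ₂, fun t ht => hmono t h₂ (hΦ₁ t ht)⟩⟩

theorem exists_fusion (hmono : ∀ s ⦃M M' : Set ℕ⦄, M' ⊆ M → Φ s M → Φ s M')
    (hex : ∀ s (M : Set ℕ), M.Infinite → ∃ M' ⊆ M, M'.Infinite ∧ Φ s M')
    {N : Set ℕ} (hN : N.Infinite) :
    ∃ M ⊆ N, M.Infinite ∧ ∀ s : Finset ℕ, ↑s ⊆ M → Φ s (above s M) := by
  have hstep (n : ℕ) (M : Set ℕ) (hM : M.Infinite) :
      ∃ M' ⊆ M, M'.Infinite ∧ ∀ s ⊆ Finset.range n, Φ s M' := by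
    simpa using exists_infinite_subset_forall_mem hmono hex (Finset.range n).powerset hM
  choose! next hnext_sub hnext_inf hnext using hstep
  -- `Ms (k + 1)` lies above `x k = min (Ms k)` and meets the requirements of all `s ⊆ [0, x k]`
  let step (M : {M : Set ℕ // M.Infinite}) : {M : Set ℕ // M.Infinite} :=
    ⟨next (sInf M.1 + 1) (above {sInf M.1} M.1), hnext_inf _ _ (infinite_above M.2 _)⟩
  let Ms (k : ℕ) : {M : Set ℕ // M.Infinite} := step^[k] ⟨next 0 N, hnext_inf 0 N hN⟩
  let x (k : ℕ) : ℕ := sInf (Ms k).1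
  have hsucc (k : ℕ) : (Ms (k + 1)).1 = next (x k + 1) (above {x k} (Ms k).1) := by
    simp only [Ms, Function.iterate_succ_apply']; rfl
  have hsub (k : ℕ) : (Ms (k + 1)).1 ⊆ above {x k} (Ms k).1 :=
    hsucc k ▸ hnext_sub _ _ (infinite_above (Ms k).2 _)
  have hanti : Antitone fun k => (Ms k).1 :=
    antitone_nat_of_succ_le fun k => (hsub k).trans (sep_subset _ _)
  have hx (k : ℕ) : x k ∈ (Ms k).1 := Nat.sInf_mem (Ms k).2.nonempty
  have hxmono : StrictMono x :=
    strictMono_nat_of_lt_succ fun k => (hsub k (hx (k + 1))).2 _ (Finset.mem_singleton_self _)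
  have hxMs {j l : ℕ} (h : j ≤ l) : x l ∈ (Ms j).1 := hanti h (hx l)
  refine ⟨range x, ?_, infinite_range_of_injective hxmono.injective, fun s hs => ?_⟩
  · rintro _ ⟨k, rfl⟩
    exact hnext_sub 0 N hN (hxMs k.zero_le)
  rcases s.eq_empty_or_nonempty with rfl | hne
  · exact hmono ∅ (fun _ ⟨⟨k, hk⟩, _⟩ => hk ▸ hxMs k.zero_le) (hnext 0 N hN ∅ (by simp))
  · obtain ⟨j, hj⟩ := hs (s.max'_mem hne)
    have hΦ : Φ s (Ms (j + 1)).1 := hsucc j ▸ hnext _ _ (infinite_above (Ms j).2 _) s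
      fun y hy => Finset.mem_range.2 (Nat.lt_succ_of_le (hj ▸ s.le_max' y hy))
    refine hmono s ?_ hΦ
    rintro _ ⟨⟨l, rfl⟩, hl⟩
    exact hxMs (hxmono.lt_iff_lt.1 (hj ▸ hl _ (s.max'_mem hne)))

end Fusion

-- the accept/reject terminology of Nash-Williams' combinatorial forcing
def Accepts (F : Set (Finset ℕ)) (M : Set ℕ) (s : Finset ℕ) : Prop :=
  ∀ X ⊆ above s M, X.Infinite → ∃ b ∈ F, NatInitSeg b (↑s ∪ X)

def Rejects (F : Set (Finset ℕ)) (M : Set ℕ) (s : Finset ℕ) : Prop :=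
  ∀ M' ⊆ M, M'.Infinite → ¬ Accepts F M' s

section NashWilliams

variable {F : Set (Finset ℕ)} {M M' N : Set ℕ} {s : Finset ℕ}

theorem Accepts.mono (h : Accepts F M s) (hM : M' ⊆ M) : Accepts F M' s :=
  fun X hX => h X (hX.trans (above_mono hM))

theorem Accepts.of_above (h : Accepts F (above s M) s) : Accepts F M s :=
  fun X hX => h X (by rwa [above_above])

theorem Rejects.mono (h : Rejects F M s) (hM : M' ⊆ M) : Rejects F M' s :=
  fun M'' h' => h M'' (h'.trans hM)

theorem Rejects.of_above (h : Rejects F (above s M) s) : Rejects F M s :=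
  fun M' hM' hM'i hacc =>
    h (above s M') (above_mono hM') (infinite_above hM'i s) (hacc.mono (sep_subset _ _))

theorem accepts_of_mem (hs : s ∈ F) : Accepts F M s :=
  fun _ hX _ => ⟨s, hs, natInitSeg_union hX⟩

theorem Rejects.finite_accepts_insert (h : Rejects F M s) :
    {x ∈ above s M | Accepts F M (insert x s)}.Finite := by
  by_contra hinf
  refine h _ ((sep_subset _ _).trans (sep_subset _ _)) hinf fun X hX hXi => ?_
  have hx : sInf X ∈ X := Nat.sInf_mem hXi.nonempty
  have htail : tail X ⊆ above (insert (sInf X) s) M := fun z hz => by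
    have hzs : z ∈ above s M := (hX (tail_subset hz)).1.1
    refine ⟨hzs.1, fun y hy => ?_⟩
    rcases Finset.mem_insert.1 hy with rfl | hy
    · exact sInf_lt_of_mem_tail hz
    · exact hzs.2 y hy
  obtain ⟨b, hb, hbX⟩ := (hX hx).1.2 _ htail (infinite_tail hXi)
  refine ⟨b, hb, ?_⟩
  rwa [Finset.coe_insert, insert_union, ← union_insert, tail, insert_sdiff_singleton,
    insert_eq_of_mem hx] at hbX

theorem exists_accepts_or_rejects (hM : M.Infinite) (s : Finset ℕ) :
    ∃ M' ⊆ M, M'.Infinite ∧ (Accepts F M' s ∨ Rejects F M' s) := by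
  by_cases h : Rejects F M s
  · exact ⟨M, subset_rfl, hM, Or.inr h⟩
  · simp only [Rejects, not_forall, not_not] at h
    obtain ⟨M', hM', hM'i, hacc⟩ := h
    exact ⟨M', hM', hM'i, Or.inl hacc⟩

theorem exists_forall_accepts_or_rejects (hN : N.Infinite) :
    ∃ M ⊆ N, M.Infinite ∧ ∀ s : Finset ℕ, ↑s ⊆ M → Accepts F M s ∨ Rejects F M s := by
  obtain ⟨M, hMN, hM, h⟩ := exists_fusion (Φ := fun s M => Accepts F M s ∨ Rejects F M s)
    (fun _ _ _ h => Or.imp (·.mono h) (·.mono h)) (fun s _ hM => exists_accepts_or_rejects hM s) hN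
  exact ⟨M, hMN, hM, fun s hs => (h s hs).imp Accepts.of_above Rejects.of_above⟩

theorem exists_forall_rejects (hM : M.Infinite)
    (hdec : ∀ s : Finset ℕ, ↑s ⊆ M → Accepts F M s ∨ Rejects F M s) (hrej : Rejects F M ∅) :
    ∃ K ⊆ M, K.Infinite ∧ ∀ s : Finset ℕ, ↑s ⊆ K → Rejects F M s := by
  -- thin out `M` so that no rejected `s` has an accepted one-point extension inside it
  obtain ⟨K, hKM, hK, hfus⟩ := exists_fusion
    (Φ := fun s K => Rejects F M s → ∀ x ∈ K, x ∈ above s M → ¬ Accepts F M (insert x s))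
    (fun _ _ _ hK' h hs x hx => h hs x (hK' hx))
    (fun s K hK => by
      by_cases hs : Rejects F M s
      · exact ⟨_, sdiff_subset, hK.sdiff hs.finite_accepts_insert,
          fun _ x hx hxM hacc => hx.2 ⟨hxM, hacc⟩⟩
      · exact ⟨K, subset_rfl, hK, fun h => absurd h hs⟩) hM
  refine ⟨K, hKM, hK, fun s => Finset.induction_on_max s (fun _ => hrej) ?_⟩
  intro a s hlt ih hs
  rw [Finset.coe_insert, insert_subset_iff] at hs
  refine (hdec _ ?_).resolve_left (hfus s hs.2 (ih hs.2) a ⟨hs.1, hlt⟩ ⟨hKM hs.1, hlt⟩)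
  simpa only [Finset.coe_insert] using insert_subset (hKM hs.1) (hs.2.trans hKM)

theorem exists_forall_natInitSeg_or_forall_not_subset (F : Set (Finset ℕ)) (hN : N.Infinite) :
    ∃ M ⊆ N, M.Infinite ∧
      ((∀ X ⊆ M, X.Infinite → ∃ b ∈ F, NatInitSeg b X) ∨ ∀ b ∈ F, ¬ ↑b ⊆ M) := by
  obtain ⟨M, hMN, hM, hdec⟩ := exists_forall_accepts_or_rejects (F := F) hN
  rcases hdec ∅ (by simp) with hacc | hrej
  · refine ⟨M, hMN, hM, Or.inl fun X hX hXi => ?_⟩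
    simpa using hacc X (by simpa [above] using hX) hXi
  · obtain ⟨K, hKM, hK, hrej⟩ := exists_forall_rejects hM hdec hrej
    exact ⟨K, hKM.trans hMN, hK, Or.inr fun b hb hbK => hrej b hbK K hKM hK (accepts_of_mem hb)⟩

end NashWilliams

end Barrier

section ShiftPairs

variable {B : Set (Finset ℕ)} {M N : Set ℕ}

theorem IsAntichain.exists_homogeneous (hB : IsAntichain (· ⊆ ·) B) (Q : Finset ℕ → Prop)
    (hN : N.Infinite) :
    ∃ M ⊆ N, M.Infinite ∧ ((∀ b ∈ restrict B M, Q b) ∨ ∀ b ∈ restrict B M, ¬ Q b) := by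
  obtain ⟨M, hMN, hM, hF | hF⟩ := exists_forall_natInitSeg_or_forall_not_subset {b ∈ B | Q b} hN
  · refine ⟨M, hMN, hM, Or.inl fun b hb => ?_⟩
    obtain ⟨b', hb', hb'X⟩ := hF _ (union_subset hb.2 (sep_subset _ _))
      ((infinite_above hM b).mono subset_union_right)
    exact hB.eq_of_natInitSeg hb'.1 hb.1 hb'X (natInitSeg_union subset_rfl) ▸ hb'.2
  · exact ⟨M, hMN, hM, Or.inr fun b hb hQ => hF b ⟨hb.1, hQ⟩ hb.2⟩

theorem IsBarrier.exists_onShiftPairs_or_not (hB : IsBarrier B)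
    (R : Finset ℕ → Finset ℕ → Prop) (hN : N.Infinite) :
    ∃ M ⊆ N, M.Infinite ∧
      (OnShiftPairs (restrict B M) R ∨ OnShiftPairs (restrict B M) fun s t => ¬ R s t) := by
  obtain ⟨q, hq⟩ := hB.exists_onShiftPairs_union (R := fun s t (p : Prop) => p ↔ R s t)
    fun _ _ _ _ _ => ⟨_, Iff.rfl⟩
  obtain ⟨M, hMN, hM, hpos | hneg⟩ := (isBarrier_pairs hB).isAntichain.exists_homogeneous q hN
  · exact ⟨M, hMN, hM, Or.inl fun s hs t ht hst =>
      (hq s hs.1 t ht.1 hst).1 (hpos _ (union_mem_restrict_pairs hs ht hst))⟩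
  · exact ⟨M, hMN, hM, Or.inr fun s hs t ht hst =>
      hneg _ (union_mem_restrict_pairs hs ht hst) ∘ (hq s hs.1 t ht.1 hst).2⟩

theorem IsBqoRel.exists_onShiftPairs {α : Type*} {le : α → α → Prop} (hle : IsBqoRel le)
    (hB : IsBarrier B) (g : Finset ℕ → α) (hN : N ⊆ base B) (hNi : N.Infinite) :
    ∃ M ⊆ N, M.Infinite ∧ OnShiftPairs (restrict B M) fun s t => le (g s) (g t) := by
  obtain ⟨M, hMN, hM, hpos | hneg⟩ := hB.exists_onShiftPairs_or_not (fun s t => le (g s) (g t)) hNi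
  · exact ⟨M, hMN, hM, hpos⟩
  · obtain ⟨s, hs, t, ht, hst, hst_le⟩ := hle _ (isBarrier_restrict hB (hMN.trans hN) hM) g
    exact (hneg s hs t ht hst hst_le).elim

theorem IsBarrier.eq_of_onShiftPairs_eq {α : Type*} (hB : IsBarrier B) {g : Finset ℕ → α}
    (hM : M ⊆ base B) (hMi : M.Infinite) (hg : OnShiftPairs (restrict B M) fun s t => g s = g t)
    {u v : Finset ℕ} (hu : u ∈ restrict B M) (hv : v ∈ restrict B M) : g u = g v := by
  have key (s : Finset ℕ) :
      ↑s ⊆ M → ∀ T ⊆ above s M, T.Infinite → g (seg B (↑s ∪ T)) = g (seg B T) := by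
    refine Finset.induction_on_min s (by simp) fun a s hlt ih hs T hT hTi => ?_
    set X := ↑(insert a s) ∪ T
    have hX : X ⊆ M := union_subset hs (hT.trans (sep_subset _ _))
    have hXi : X.Infinite := hTi.mono subset_union_right
    have htail : tail X = ↑s ∪ T := by
      simp only [X, Finset.coe_insert, insert_union]
      exact tail_insert fun y hy =>
        hy.elim (hlt y) fun hy => (hT hy).2 a (Finset.mem_insert_self a s)
    obtain ⟨hr, hrX⟩ := seg_spec (hB.exists_natInitSeg (hX.trans hM) hXi)
    obtain ⟨hr', hr'X⟩ :=
      seg_spec (hB.exists_natInitSeg (tail_subset.trans (hX.trans hM)) (infinite_tail hXi))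
    rw [hg _ ⟨hr, hrX.1.trans hX⟩ _ ⟨hr', hr'X.1.trans (tail_subset.trans hX)⟩
      (hB.shiftExt_of_natInitSeg hr hrX hr' hr'X), htail]
    rw [Finset.coe_insert, insert_subset_iff] at hs
    exact ih hs.2 T (hT.trans (above_anti (Finset.subset_insert a s))) hTi
  set T := above (u ∪ v) M
  have hT : T.Infinite := infinite_above hMi _
  have hsegu : seg B (↑u ∪ T) = u :=
    hB.isAntichain.seg_eq hu.1 (natInitSeg_union (above_anti Finset.subset_union_left))
  have hsegv : seg B (↑v ∪ T) = v :=
    hB.isAntichain.seg_eq hv.1 (natInitSeg_union (above_anti Finset.subset_union_right))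
  calc g u = g (seg B T) := hsegu ▸ key u hu.2 T (above_anti Finset.subset_union_left) hT
    _ = g v := hsegv ▸ (key v hv.2 T (above_anti Finset.subset_union_right) hT).symm

theorem IsBarrier.exists_chain (hB : IsBarrier B) (hM : M ⊆ base B) (hMi : M.Infinite) :
    ∃ c : ℕ → Finset ℕ, (∀ m, c m ∈ restrict B M) ∧ (∀ m, ShiftExt (c m) (c (m + 1))) ∧
      ∀ m, ShiftExt (c m ∪ c (m + 1)) (c (m + 1) ∪ c (m + 2)) := by
  have hseg (m : ℕ) := seg_spec (hB.exists_natInitSeg ((iterate_tail_subset m).trans hM)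
    (infinite_iterate_tail hMi m))
  have hsucc (m : ℕ) : tail^[m + 1] M = tail (tail^[m] M) := Function.iterate_succ_apply' _ _ _
  have hshift (m : ℕ) : ShiftExt (seg B (tail^[m] M)) (seg B (tail^[m + 1] M)) :=
    hB.shiftExt_of_natInitSeg (hseg m).1 (hseg m).2 (hseg (m + 1)).1 (hsucc m ▸ (hseg (m + 1)).2)
  have hpair (m : ℕ) :
      NatInitSeg (seg B (tail^[m] M) ∪ seg B (tail^[m + 1] M)) (tail^[m] M) :=
    (hseg m).2.union_tail ((hseg m).2.sInf_mem (hB.nonempty_of_mem (hseg m).1))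
      (hsucc m ▸ (hseg (m + 1)).2)
  refine ⟨fun m => seg B (tail^[m] M),
    fun m => ⟨(hseg m).1, (hseg m).2.1.trans (iterate_tail_subset m)⟩, hshift, fun m => ?_⟩
  exact (isBarrier_pairs hB).shiftExt_of_natInitSeg
    ⟨_, (hseg m).1, _, (hseg (m + 1)).1, hshift m, rfl⟩ (hpair m)
    ⟨_, (hseg (m + 1)).1, _, (hseg (m + 2)).1, hshift (m + 1), rfl⟩ (hsucc m ▸ hpair (m + 1))

end ShiftPairs

section DressSchiffels

variable {I : Type*} [PartialOrder I] {P : I → Type*}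

theorem exists_maximal_not_le_of_not_dsle [∀ i, PartialOrder (P i)] {f g : ∀ i, P i}
    (h : ¬ DSle f g) : ∃ i, Maximal (fun j => f j ≠ g j) i ∧ ¬ f i ≤ g i := by
  simp only [DSle, not_forall] at h
  obtain ⟨i, hi, hlt⟩ := h
  exact ⟨i, hi, fun hle => hlt (hle.lt_of_ne hi.1)⟩

theorem apply_eq_of_maximal {g : ℕ → ∀ i, P i} {ι : ℕ → I} (hι : StrictMono ι)
    (hmax : ∀ m, Maximal (fun j => g m j ≠ g (m + 1) j) (ι m)) {k m : ℕ} (hkm : k ≤ m) :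
    g k (ι m) = g m (ι m) := by
  induction hkm using Nat.decreasingInduction with
  | self => rfl
  | of_succ k hk ih =>
    refine Eq.trans (not_not.1 fun hne => ?_) ih
    exact (hι hk).not_ge ((hmax k).2 hne (hι hk).le)

theorem IsBarrier.exists_infinite_support [∀ i, Bot (P i)] {B : Set (Finset ℕ)} {M : Set ℕ}
    (hB : IsBarrier B) (hM : M ⊆ base B) (hMi : M.Infinite) {g : Finset ℕ → ∀ i, P i}
    {χ : Finset ℕ → I}
    (hχ : OnShiftPairs B fun s t => Maximal (fun j => g s j ≠ g t j) (χ (s ∪ t)) ∧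
      g s (χ (s ∪ t)) ≠ ⊥)
    (hmono : OnShiftPairs (restrict (pairs B) M) fun u v => χ u < χ v) :
    ∃ b ∈ B, {i | g b i ≠ ⊥}.Infinite := by
  obtain ⟨c, hc, hshift, hshift₂⟩ := hB.exists_chain hM hMi
  have hι : StrictMono fun m => χ (c m ∪ c (m + 1)) := strictMono_nat_of_lt_succ fun m =>
    hmono _ (union_mem_restrict_pairs (hc m) (hc (m + 1)) (hshift m))
      _ (union_mem_restrict_pairs (hc (m + 1)) (hc (m + 2)) (hshift (m + 1))) (hshift₂ m)
  refine ⟨c 0, (hc 0).1, infinite_of_injective_forall_mem hι.injective fun m => ?_⟩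
  have hm (m : ℕ) := hχ _ (hc m).1 _ (hc (m + 1)).1 (hshift m)
  rw [mem_ofPred_eq, apply_eq_of_maximal (g := fun m => g (c m)) hι (fun m => (hm m).1) m.zero_le]
  exact (hm m).2

end DressSchiffels

/-- If `I` is bqo and every `P i` is bqo, then the Dress–Schiffels product is bqo. -/
theorem stmt_11 {I : Type u} [PartialOrder I] {P : I → Type v} [∀ i, PartialOrder (P i)]
    [∀ i, OrderBot (P i)]
    (hI : IsBqoRel ((· ≤ ·) : I → I → Prop))
    (hP : ∀ i, IsBqoRel ((· ≤ ·) : P i → P i → Prop)) :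
    IsBqoRel (fun f g : DSProd I P => DSle f.1 g.1) := by
  intro B hB f
  by_contra hbad
  obtain ⟨χ, hχ⟩ : ∃ χ : Finset ℕ → I, OnShiftPairs B fun s t =>
      Maximal (fun j => (f s).1 j ≠ (f t).1 j) (χ (s ∪ t)) ∧
        ¬ (f s).1 (χ (s ∪ t)) ≤ (f t).1 (χ (s ∪ t)) :=
    hB.exists_onShiftPairs_union fun s hs t ht hst =>
      exists_maximal_not_le_of_not_dsle fun h => hbad ⟨s, hs, t, ht, hst, h⟩
  have hC := isBarrier_pairs hB
  obtain ⟨M₁, hM₁C, hM₁, hle⟩ := hI.exists_onShiftPairs hC χ subset_rfl hC.base_infinite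
  obtain ⟨M₂, hM₂₁, hM₂, heq | hne⟩ := hC.exists_onShiftPairs_or_not (fun u v => χ u = χ v) hM₁
  · -- `χ` is constant, `= i`, on `B²` inside `M₂`, so `b ↦ (f b) i` is bad on `B` inside `M₂`
    have hM₂C := hM₂₁.trans hM₁C
    obtain ⟨u, hu⟩ := (isBarrier_restrict hC hM₂C hM₂).1.nonempty
    obtain ⟨s, hs, t, ht, hst, hst_le⟩ :=
      hP (χ u) _ (isBarrier_restrict hB (hM₂C.trans base_pairs_subset) hM₂) fun b => (f b).1 (χ u)
    have hχu := hC.eq_of_onShiftPairs_eq hM₂C hM₂ heq (union_mem_restrict_pairs hs ht hst) hu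
    exact (hχ s hs.1 t ht.1 hst).2 (hχu ▸ hst_le)
  · -- `χ` strictly increases along shift pairs of `B²` inside `M₂`
    obtain ⟨b, -, hb⟩ := hB.exists_infinite_support (hM₂₁.trans hM₁C |>.trans base_pairs_subset)
      hM₂ (fun s hs t ht hst => (hχ s hs t ht hst).imp_right fun h h0 => h (h0 ▸ bot_le))
      fun u hu v hv huv => (hle u (restrict_mono hM₂₁ hu) v (restrict_mono hM₂₁ hv) huv).lt_of_ne
        (hne u hu v hv huv)
    exact hb (f b).2
end

section
/- Let P be a wqo poset whose cardinality κ is an infinite cardinal of cofinality ℵ₀. If every subset Q ⊆ P of cardinality < κ, with the order induced from P, is σ-bqo, then P is σ-bqo. -/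
universe u v

open Set

/-!
Well-order `P` in type `κ.ord`. Since `cf κ = ℵ₀`, a countable cofinal set `{x n}` exists, so `P`
is the union of the initial segments `{p | p < x n}`, each of cardinality `< κ`. Each of them is
`σ`-bqo, and the countably many bqo pieces of all of them together witness that `P` is `σ`-bqo.
-/

theorem IsBqoRel.of_map {X : Type*} {Y : Type*} {le : X → X → Prop} {le' : Y → Y → Prop}
    (φ : Y → X) (hφ : ∀ x y, le (φ x) (φ y) → le' x y) (h : IsBqoRel le) : IsBqoRel le' := by
  intro B hB f
  obtain ⟨s, hs, t, ht, hst, hle⟩ := h B hB (φ ∘ f)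
  exact ⟨s, hs, t, ht, hst, hφ _ _ hle⟩

theorem IsSigmaBqoRel.of_iUnion {X : Type*} {le : X → X → Prop} (hwqo : IsWqoRel le)
    (Q : ℕ → Set X) (hQ : ⋃ n, Q n = univ)
    (h : ∀ n, IsSigmaBqoRel (fun x y : Q n => le x.1 y.1)) : IsSigmaBqoRel le := by
  choose S hS hS_bqo using fun n => (h n).2
  let T : ℕ → ℕ → Set X := fun n m => {x | ∃ hx : x ∈ Q n, ⟨x, hx⟩ ∈ S n m}
  refine ⟨hwqo, fun k => T k.unpair.1 k.unpair.2, eq_univ_of_forall fun x => ?_, fun k => ?_⟩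
  · obtain ⟨n, hn⟩ := mem_iUnion.1 (hQ ▸ mem_univ x)
    obtain ⟨m, hm⟩ := mem_iUnion.1 ((hS n).symm ▸ mem_univ (⟨x, hn⟩ : Q n))
    exact mem_iUnion.2 ⟨Nat.pair n m, by simpa only [Nat.unpair_pair] using ⟨hn, hm⟩⟩
  · exact (hS_bqo _ _).of_map (fun x => ⟨⟨x.1, x.2.1⟩, x.2.2⟩) fun _ _ => id

open scoped Cardinal in
theorem Cardinal.exists_iUnion_eq_univ_mk_lt_of_cof_ord_eq_aleph0 {X : Type u}
    (h : (#X).ord.cof = ℵ₀) : ∃ Q : ℕ → Set X, ⋃ n, Q n = Set.univ ∧ ∀ n, #(Q n) < #X := by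
  let α := (#X).ord.ToType
  have : NoMaxOrder α := noMaxOrder (h ▸ Ordinal.cof_ord_le _)
  obtain ⟨e⟩ : Nonempty (X ≃ α) := Cardinal.eq.1 (mk_ord_toType _).symm
  obtain ⟨s, hs, hs_card⟩ := Order.exists_cof_eq α
  rw [Ordinal.cof_toType, h] at hs_card
  have hs_nonempty : s.Nonempty :=
    nonempty_coe_sort.1 <| mk_ne_zero_iff.1 <| hs_card ▸ aleph0_ne_zero
  obtain ⟨x, rfl⟩ := (le_aleph0_iff_set_countable.1 hs_card.le).exists_eq_range hs_nonempty
  refine ⟨fun n => e ⁻¹' Iio (x n), eq_univ_of_forall fun p => ?_, fun n => ?_⟩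
  · obtain ⟨a, ha⟩ := exists_gt (e p)
    obtain ⟨_, ⟨n, rfl⟩, hn⟩ := hs a
    exact mem_iUnion.2 ⟨n, ha.trans_le hn⟩
  · calc #(e ⁻¹' Iio (x n)) = #(Iio (x n)) := mk_preimage_equiv _ _
      _ < #α := mk_Iio_lt _ (by simp [α])
      _ = #X := mk_ord_toType _

theorem stmt_16_general {P : Type u} [PartialOrder P]
    (hcof : (Cardinal.mk P).ord.cof = Cardinal.aleph0)
    (hwqo : IsWqoRel ((· ≤ ·) : P → P → Prop))
    (hsmall : ∀ Q : Set P, Cardinal.mk Q < Cardinal.mk P →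
      IsSigmaBqoRel (fun x y : Q => x.1 ≤ y.1)) :
    IsSigmaBqoRel ((· ≤ ·) : P → P → Prop) := by
  obtain ⟨Q, hQ, hQ_lt⟩ := Cardinal.exists_iUnion_eq_univ_mk_lt_of_cof_ord_eq_aleph0 hcof
  exact IsSigmaBqoRel.of_iUnion hwqo Q hQ fun n => hsmall _ (hQ_lt n)

/-- If `P` is a wqo of infinite cardinality `κ` with `cf(κ) = ℵ₀` and every subset of
cardinality `< κ` is `σ`-bqo in the induced order, then `P` is `σ`-bqo. -/
theorem stmt_16 {P : Type u} [PartialOrder P] [Infinite P]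
    (hcof : (Cardinal.mk P).ord.cof = Cardinal.aleph0)
    (hwqo : IsWqoRel ((· ≤ ·) : P → P → Prop))
    (hsmall : ∀ Q : Set P, Cardinal.mk Q < Cardinal.mk P →
      IsSigmaBqoRel (fun x y : Q => x.1 ≤ y.1)) :
    IsSigmaBqoRel ((· ≤ ·) : P → P → Prop) :=
  stmt_16_general hcof hwqo hsmall
end

section
/- Let f be a function from a barrier U into a poset P. Then there is a sub-barrier V ⊆ U such that the restriction f↾V is either bad or perfect. -/
universe u v

open Set

/-!
Let `F` be the family of unions `s ∪ t` with `s ◁ t` in `U` and `f s ≤ f t`. Since `U` is an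
antichain, such a pair is recovered from any infinite set having `s ∪ t` as an initial segment:
`s` is its initial segment in `U`, and `t` that of the set with `min s` removed. The
Nash-Williams theorem (via the accept/reject combinatorial forcing of Galvin–Prikry) gives an
infinite `X` in the base of `U` such that either all or none of the infinite subsets of `X` have an
initial segment in `F`. On the sets `b ∈ U` with `b ⊆ X`, `f` is perfect in the first case and bad
in the second.
-/

theorem exists_strictMono_fusion (Inv : Finset ℕ → Set ℕ → Prop)
    (hmono : ∀ E {Y Y'}, Y' ⊆ Y → Inv E Y → Inv E Y') {M : Set ℕ} (hM : M.Infinite)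
    (h0 : Inv ∅ M) (hstep : ∀ E Y, Y.Infinite → Inv E Y →
      ∃ x ∈ Y, ∃ Y' ⊆ Y, Y'.Infinite ∧ (∀ y ∈ Y', x < y) ∧ Inv (insert x E) Y') :
    ∃ x : ℕ → ℕ, StrictMono x ∧ (∀ n, x n ∈ M) ∧
      ∀ n, Inv ((Finset.range n).image x) (x '' Ici n) := by
  choose! next hnext Y' hY'Y hY'inf hY'gt hY'inv using hstep
  let st : ℕ → Finset ℕ × Set ℕ := fun n =>
    Nat.rec (∅, M) (fun _ p => (insert (next p.1 p.2) p.1, Y' p.1 p.2)) n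
  have hst : ∀ n, (st n).2.Infinite ∧ Inv (st n).1 (st n).2 := by
    intro n
    induction n with
    | zero => exact ⟨hM, h0⟩
    | succ n ih => exact ⟨hY'inf _ _ ih.1 ih.2, hY'inv _ _ ih.1 ih.2⟩
  set x : ℕ → ℕ := fun n => next (st n).1 (st n).2
  have hxmem : ∀ n, x n ∈ (st n).2 := fun n => hnext _ _ (hst n).1 (hst n).2
  have hanti : Antitone fun n => (st n).2 :=
    antitone_nat_of_succ_le fun n => hY'Y _ _ (hst n).1 (hst n).2
  have hx : StrictMono x :=
    strictMono_nat_of_lt_succ fun n => hY'gt _ _ (hst n).1 (hst n).2 _ (hxmem (n + 1))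
  have hE : ∀ n, (st n).1 = (Finset.range n).image x := by
    intro n
    induction n with
    | zero => rfl
    | succ n ih => rw [Finset.range_add_one, Finset.image_insert, ← ih]
  refine ⟨x, hx, fun n => hanti (Nat.zero_le n) (hxmem n), fun n => ?_⟩
  rw [← hE]
  refine hmono _ ?_ (hst n).2
  rintro _ ⟨m, hm, rfl⟩
  exact hanti hm (hxmem m)

def HasInitSegIn (F : Set (Finset ℕ)) (Y : Set ℕ) : Prop :=
  ∃ r ∈ F, NatInitSeg r Y

namespace NashWilliams

def Accepts (F : Set (Finset ℕ)) (s : Finset ℕ) (Z : Set ℕ) : Prop :=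
  ∀ W ⊆ Z, W.Infinite → (∀ w ∈ W, ∀ y ∈ s, y < w) → HasInitSegIn F (↑s ∪ W)

def Rejects (F : Set (Finset ℕ)) (s : Finset ℕ) (Z : Set ℕ) : Prop :=
  ∀ Y ⊆ Z, Y.Infinite → ¬ Accepts F s Y

variable {F : Set (Finset ℕ)} {s : Finset ℕ} {X Z : Set ℕ}

theorem Accepts.mono (h : Accepts F s Z) (hXZ : X ⊆ Z) : Accepts F s X :=
  fun W hW => h W (hW.trans hXZ)

theorem Rejects.mono (h : Rejects F s Z) (hXZ : X ⊆ Z) : Rejects F s X :=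
  fun Y hY => h Y (hY.trans hXZ)

theorem Rejects.union_finite (h : Rejects F s Z) {A : Set ℕ} (hA : A.Finite) :
    Rejects F s (Z ∪ A) := fun Y hY hYi hacc =>
  h (Y \ A) (fun _ hy => (hY hy.1).resolve_right hy.2) (hYi.sdiff hA) (hacc.mono sdiff_subset)

theorem accepts_of_mem (hs : s ∈ F) (Z : Set ℕ) : Accepts F s Z :=
  fun _ _ _ hW => ⟨s, hs, subset_union_left, fun x hx hxs y hy => hW x (hx.resolve_left hxs) y hy⟩

theorem Accepts.hasInitSegIn (h : Accepts F ∅ Z) {Y : Set ℕ} (hY : Y ⊆ Z) (hYi : Y.Infinite) :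
    HasInitSegIn F Y := by
  simpa using h Y hY hYi (by simp)

theorem exists_subset_accepts_or_rejects (F : Set (Finset ℕ)) (s : Finset ℕ)
    (hX : X.Infinite) : ∃ Z ⊆ X, Z.Infinite ∧ (Accepts F s Z ∨ Rejects F s Z) := by
  by_cases h : ∃ Z ⊆ X, Z.Infinite ∧ Accepts F s Z
  · obtain ⟨Z, hZX, hZi, hZ⟩ := h
    exact ⟨Z, hZX, hZi, Or.inl hZ⟩
  · push Not at h
    exact ⟨X, subset_rfl, hX, Or.inr h⟩

theorem accepts_of_forall_accepts_insert {A : Set ℕ}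
    (h : ∀ a ∈ A, Accepts F (insert a s) {b ∈ A | a < b}) : Accepts F s A := by
  intro W hWA hWi hWs
  set m := sInf W
  have hmW : m ∈ W := Nat.sInf_mem hWi.nonempty
  have hm : ∀ w ∈ W, w ≠ m → m < w := fun w hw hne =>
    (Nat.sInf_le hw).lt_of_ne (Ne.symm hne)
  have hins : ↑(insert m s) ∪ W \ {m} = ↑s ∪ W := by
    ext w
    by_cases hw : w = m <;> simp [hw, hmW]
  rw [← hins]
  refine h m (hWA hmW) _ (fun w hw => ⟨hWA hw.1, hm w hw.1 hw.2⟩)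
    (hWi.sdiff (finite_singleton m)) ?_
  rintro w ⟨hw, hne⟩ y hy
  rcases Finset.mem_insert.mp hy with rfl | hy
  · exact hm w hw hne
  · exact hWs w hw y hy

theorem Rejects.exists_subset_forall_rejects_insert (h : Rejects F s X) (hX : X.Infinite) :
    ∃ Z ⊆ X, Z.Infinite ∧ ∀ n ∈ Z, Rejects F (insert n s) Z := by
  -- Each tail `x '' Ici (i + 1)` decides `insert (x i) s`. If infinitely many accept, so does
  -- the set of those `x i`, against `h`; otherwise a tail of `range x` works.
  obtain ⟨x, hx, hxX, hdec⟩ := exists_strictMono_fusion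
    (fun E Y => ∀ e ∈ E, Accepts F (insert e s) Y ∨ Rejects F (insert e s) Y)
    (fun _ _ _ hY' h e he => (h e he).imp (·.mono hY') (·.mono hY')) hX (by simp)
    (fun E Y hY h => by
      obtain ⟨x, hx⟩ := hY.nonempty
      obtain ⟨Y', hY', hY'i, hdec⟩ :=
        exists_subset_accepts_or_rejects F (insert x s) (hY.sdiff (finite_Iic x))
      have hY'Y : Y' ⊆ Y := hY'.trans sdiff_subset
      refine ⟨x, hx, Y', hY'Y, hY'i, fun y hy => not_le.1 (hY' hy).2, fun e he => ?_⟩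
      rcases Finset.mem_insert.mp he with rfl | he
      · exact hdec
      · exact (h e he).imp (·.mono hY'Y) (·.mono hY'Y))
  have hdec' (i : ℕ) : Accepts F (insert (x i) s) (x '' Ici (i + 1)) ∨
      Rejects F (insert (x i) s) (x '' Ici (i + 1)) :=
    hdec (i + 1) (x i) (Finset.mem_image_of_mem x (Finset.self_mem_range_succ i))
  set I := {i | Accepts F (insert (x i) s) (x '' Ici (i + 1))}
  rcases I.finite_or_infinite with hI | hI
  · obtain ⟨N, hN⟩ := hI.bddAbove
    refine ⟨x '' Ici (N + 1), image_subset_range _ _ |>.trans (range_subset_iff.2 hxX),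
      (Ici_infinite _).image hx.injective.injOn, ?_⟩
    rintro _ ⟨i, hi, rfl⟩
    have hrej : Rejects F (insert (x i) s) (x '' Ici (i + 1)) :=
      (hdec' i).resolve_left fun hacc => by
        have := hN hacc
        simp only [mem_Ici] at hi
        omega
    refine (hrej.union_finite ((finite_Ico (N + 1) (i + 1)).image x)).mono ?_
    rintro _ ⟨j, hj, rfl⟩
    rcases lt_or_ge j (i + 1) with hji | hji
    · exact Or.inr ⟨j, ⟨hj, hji⟩, rfl⟩
    · exact Or.inl ⟨j, hji, rfl⟩
  · refine absurd ?_ (h (x '' I) (image_subset_range _ _ |>.trans (range_subset_iff.2 hxX))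
      (hI.image hx.injective.injOn))
    refine accepts_of_forall_accepts_insert ?_
    rintro _ ⟨i, hi, rfl⟩
    refine (hi : Accepts F _ _).mono ?_
    rintro _ ⟨⟨j, -, rfl⟩, hij⟩
    exact ⟨j, hx.lt_iff_lt.1 hij, rfl⟩

theorem exists_subset_rejects_insert_of_forall_rejects (S : Finset (Finset ℕ)) (hX : X.Infinite)
    (h : ∀ s ∈ S, Rejects F s X) :
    ∃ Z ⊆ X, Z.Infinite ∧ ∀ s ∈ S, Rejects F s Z ∧ ∀ n ∈ Z, Rejects F (insert n s) Z := by
  induction S using Finset.induction generalizing X with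
  | empty => exact ⟨X, subset_rfl, hX, by simp⟩
  | insert a S _ ih =>
    obtain ⟨Y, hYX, hYi, hY⟩ := ih hX fun s hs => h s (Finset.mem_insert_of_mem hs)
    have hra : Rejects F a Y := (h a (Finset.mem_insert_self a S)).mono hYX
    obtain ⟨Z, hZY, hZi, hZ⟩ := hra.exists_subset_forall_rejects_insert hYi
    refine ⟨Z, hZY.trans hYX, hZi, fun s hs => ?_⟩
    rcases Finset.mem_insert.mp hs with rfl | hs
    · exact ⟨hra.mono hZY, hZ⟩
    · exact ⟨(hY s hs).1.mono hZY, fun n hn => ((hY s hs).2 n (hZY hn)).mono hZY⟩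

theorem Rejects.exists_subset_forall_rejects (h : Rejects F ∅ X) (hX : X.Infinite) :
    ∃ Z ⊆ X, Z.Infinite ∧ ∀ s : Finset ℕ, ↑s ⊆ Z → Rejects F s Z := by
  obtain ⟨x, hx, hxX, hrej⟩ := exists_strictMono_fusion (fun E Y => ∀ t ⊆ E, Rejects F t Y)
    (fun _ _ _ hY' h t ht => (h t ht).mono hY') hX (by simpa using h)
    (fun E Y hY h => by
      obtain ⟨Z, hZY, hZi, hZ⟩ := exists_subset_rejects_insert_of_forall_rejects E.powerset hY
        fun t ht => h t (Finset.mem_powerset.1 ht)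
      obtain ⟨z, hz⟩ := hZi.nonempty
      refine ⟨z, hZY hz, Z \ Iic z, sdiff_subset.trans hZY, hZi.sdiff (finite_Iic z),
        fun y hy => not_le.1 hy.2, fun t ht => ?_⟩
      by_cases hzt : z ∈ t
      · rw [← Finset.insert_erase hzt]
        exact ((hZ _ (Finset.mem_powerset.2 (Finset.subset_insert_iff.1 ht))).2 z hz).mono
          sdiff_subset
      · have htE : t ⊆ E := (Finset.subset_insert_iff_of_notMem hzt).1 ht
        exact (hZ t (Finset.mem_powerset.2 htE)).1.mono sdiff_subset)
  refine ⟨range x, range_subset_iff.2 hxX, infinite_range_of_injective hx.injective,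
    fun s hs => ?_⟩
  set n := s.sup id + 1
  have hsE : s ⊆ (Finset.range n).image x := by
    intro a ha
    obtain ⟨i, rfl⟩ := hs ha
    refine Finset.mem_image_of_mem x (Finset.mem_range.2 ?_)
    have hi : i ≤ x i := hx.le_apply
    have hxi : x i ≤ s.sup id := Finset.le_sup (f := id) ha
    omega
  refine ((hrej n s hsE).union_finite ((Finset.range n).image x).finite_toSet).mono ?_
  rintro _ ⟨i, rfl⟩
  rcases lt_or_ge i n with hi | hi
  · exact Or.inr (Finset.mem_image_of_mem x (Finset.mem_range.2 hi))
  · exact Or.inl ⟨i, hi, rfl⟩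

theorem exists_infinite_subset_forall_hasInitSegIn_or_not (F : Set (Finset ℕ))
    (hX : X.Infinite) :
    ∃ Z ⊆ X, Z.Infinite ∧ ((∀ Y ⊆ Z, Y.Infinite → HasInitSegIn F Y) ∨
      (∀ Y ⊆ Z, Y.Infinite → ¬ HasInitSegIn F Y)) := by
  obtain ⟨Z, hZX, hZi, hacc | hrej⟩ := exists_subset_accepts_or_rejects F ∅ hX
  · exact ⟨Z, hZX, hZi, Or.inl fun Y hY hYi => hacc.hasInitSegIn hY hYi⟩
  obtain ⟨Z', hZ'Z, hZ'i, hZ'⟩ := hrej.exists_subset_forall_rejects hZi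
  refine ⟨Z', hZ'Z.trans hZX, hZ'i, Or.inr ?_⟩
  rintro Y hY - ⟨r, hr, hrY⟩
  exact hZ' r (hrY.1.trans hY) Z' subset_rfl hZ'i (accepts_of_mem hr Z')

end NashWilliams

theorem NatInitSeg.subset_or_subset_s17 {r r' : Finset ℕ} {Y : Set ℕ} (h : NatInitSeg r Y)
    (h' : NatInitSeg r' Y) : r ⊆ r' ∨ r' ⊆ r := by
  by_contra hc
  push Not at hc
  obtain ⟨a, ha, ha'⟩ := Finset.not_subset.mp hc.1
  obtain ⟨b, hb, hb'⟩ := Finset.not_subset.mp hc.2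
  exact (h'.2 a (h.1 ha) ha' b hb).asymm (h.2 b (h'.1 hb) hb' a ha)

theorem NatInitSeg.of_union {s t : Finset ℕ} {Y : Set ℕ}
    (hdom : ∀ x ∈ t, x ∉ s → ∀ y ∈ s, y < x) (h : NatInitSeg (s ∪ t) Y) : NatInitSeg s Y := by
  refine ⟨fun a ha => h.1 (by simp [ha]), fun x hx hxs y hy => ?_⟩
  by_cases hxt : x ∈ t
  · exact hdom x hxt hxs y hy
  · exact h.2 x hx (by simp [hxs, hxt]) y (Finset.mem_union_left t hy)

theorem NatInitSeg.sdiff_singleton_of_union {s t : Finset ℕ} {Y : Set ℕ} {m : ℕ}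
    (hmt : ∀ y ∈ t, m < y) (hst : s.erase m ⊆ t) (h : NatInitSeg (s ∪ t) Y) :
    NatInitSeg t (Y \ {m}) := by
  refine ⟨fun a ha => ⟨h.1 (by simp [ha]), (hmt a ha).ne'⟩, ?_⟩
  rintro x ⟨hx, hxm⟩ hxt y hy
  have hxs : x ∉ s := fun hxs => hxt (hst (Finset.mem_erase.2 ⟨hxm, hxs⟩))
  exact h.2 x hx (by simp [hxs, hxt]) y (Finset.mem_union_right s hy)

theorem exists_natInitSeg_of_subset {r : Finset ℕ} {X : Set ℕ} (hr : ↑r ⊆ X)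
    (hX : X.Infinite) : ∃ Y ⊆ X, Y.Infinite ∧ NatInitSeg r Y := by
  have htail : {x ∈ X | ∀ y ∈ r, y < x}.Infinite :=
    (hX.sdiff (finite_Iic (r.sup id))).mono fun x hx =>
      ⟨hx.1, fun y hy => (Finset.le_sup (f := id) hy).trans_lt (not_le.1 hx.2)⟩
  exact ⟨_, union_subset hr (sep_subset _ _), htail.mono subset_union_right, subset_union_left,
    fun x hx hxr y hy => (hx.resolve_left hxr).2 y hy⟩

theorem ShiftExt.lt_of_mem_of_notMem {s t : Finset ℕ} (h : ShiftExt s t) {x y : ℕ}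
    (hxt : x ∈ t) (hxs : x ∉ s) (hys : y ∈ s) : y < x := by
  obtain ⟨m, -, -, hmt, -, -, hseg⟩ := h
  by_cases hym : y = m
  · exact hym ▸ hmt x hxt
  · exact hseg x hxt (fun hx => hxs (Finset.mem_of_mem_erase hx)) y
      (Finset.mem_erase.2 ⟨hym, hys⟩)

namespace IsBarrier

variable {U : Set (Finset ℕ)}

theorem eq_of_natInitSeg (hU : IsBarrier U) {r r' : Finset ℕ} {Y : Set ℕ} (hr : r ∈ U)
    (hr' : r' ∈ U) (h : NatInitSeg r Y) (h' : NatInitSeg r' Y) : r = r' :=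
  (h.subset_or_subset_s17 h').elim (hU.2.1 r hr r' hr') fun hsub => (hU.2.1 r' hr' r hr hsub).symm

theorem eq_of_shiftExt_of_natInitSeg (hU : IsBarrier U) {s t s' t' : Finset ℕ} {Y : Set ℕ}
    (hs : s ∈ U) (ht : t ∈ U) (hs' : s' ∈ U) (ht' : t' ∈ U) (hst : ShiftExt s t)
    (hst' : ShiftExt s' t') (h : NatInitSeg (s ∪ t) Y) (h' : NatInitSeg (s' ∪ t') Y) :
    s = s' ∧ t = t' := by
  have hss' : s = s' := hU.eq_of_natInitSeg hs hs'
    (h.of_union fun _ hx hxs _ hy => hst.lt_of_mem_of_notMem hx hxs hy)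
    (h'.of_union fun _ hx hxs _ hy => hst'.lt_of_mem_of_notMem hx hxs hy)
  subst hss'
  obtain ⟨m, hm, hmin, hmt, hsub, -⟩ := hst
  obtain ⟨m', hm', hmin', hmt', hsub', -⟩ := hst'
  obtain rfl : m = m' := le_antisymm (hmin m' hm') (hmin' m hm)
  exact ⟨rfl, hU.eq_of_natInitSeg ht ht' (h.sdiff_singleton_of_union hmt hsub)
    (h'.sdiff_singleton_of_union hmt' hsub')⟩

theorem empty_notMem_s17 (hU : IsBarrier U) : ∅ ∉ U := fun h =>
  hU.1 ((finite_singleton ∅).subset fun b hb => (hU.2.1 ∅ h b hb (Finset.empty_subset b)).symm)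

theorem infinite_base (hU : IsBarrier U) : (⋃ b ∈ U, (↑b : Set ℕ)).Infinite := fun h =>
  hU.1 (h.finite_subsets.preimage Finset.coe_injective.injOn |>.subset
    fun _ hb => subset_biUnion_of_mem (u := fun b : Finset ℕ => (↑b : Set ℕ)) hb)

theorem restrict (hU : IsBarrier U) {X : Set ℕ} (hX : X ⊆ ⋃ b ∈ U, (↑b : Set ℕ))
    (hXi : X.Infinite) : IsBarrier {b ∈ U | ↑b ⊆ X} := by
  have hinit : ∀ Y ⊆ X, Y.Infinite → ∃ r ∈ {b ∈ U | ↑b ⊆ X}, NatInitSeg r Y := by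
    intro Y hYX hYi
    obtain ⟨r, hrU, hr⟩ := hU.2.2 Y (hYX.trans hX) hYi
    exact ⟨r, ⟨hrU, hr.1.trans hYX⟩, hr⟩
  refine ⟨fun hfin => ?_, fun a ha b hb => hU.2.1 a ha.1 b hb.1, fun Y hY hYi => hinit Y
    (hY.trans (iUnion₂_subset fun b hb => hb.2)) hYi⟩
  obtain ⟨N, hN⟩ := (hfin.biUnion fun b _ => b.finite_toSet).bddAbove
  obtain ⟨r, hrV, hr⟩ := hinit (X \ Iic N) sdiff_subset (hXi.sdiff (finite_Iic N))
  obtain ⟨a, ha⟩ := Finset.nonempty_iff_ne_empty.2 fun h => hU.empty_notMem_s17 (h ▸ hrV.1)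
  exact (hr.1 ha).2 (hN (mem_biUnion hrV ha))

end IsBarrier

def goodPairUnions {P : Type*} [LE P] (U : Set (Finset ℕ)) (f : Finset ℕ → P) :
    Set (Finset ℕ) :=
  {r | ∃ s ∈ U, ∃ t ∈ U, ShiftExt s t ∧ f s ≤ f t ∧ s ∪ t = r}

theorem IsBarrier.hasInitSegIn_goodPairUnions_iff {P : Type*} [LE P] {U : Set (Finset ℕ)}
    (hU : IsBarrier U) (f : Finset ℕ → P) {s t : Finset ℕ} {Y : Set ℕ} (hs : s ∈ U)
    (ht : t ∈ U) (hst : ShiftExt s t) (hY : NatInitSeg (s ∪ t) Y) :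
    HasInitSegIn (goodPairUnions U f) Y ↔ f s ≤ f t := by
  refine ⟨?_, fun hle => ⟨s ∪ t, ⟨s, hs, t, ht, hst, hle, rfl⟩, hY⟩⟩
  rintro ⟨_, ⟨s', hs', t', ht', hst', hle, rfl⟩, hY'⟩
  obtain ⟨rfl, rfl⟩ := hU.eq_of_shiftExt_of_natInitSeg hs' ht' hs ht hst' hst hY' hY
  exact hle

/-- For every map `f` from a barrier `U` into a poset `P` there is a sub-barrier `V ⊆ U`
on which `f` is either bad or perfect. -/
theorem stmt_17 {P : Type u} [PartialOrder P] (U : Set (Finset ℕ)) (hU : IsBarrier U)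
    (f : Finset ℕ → P) :
    ∃ V ⊆ U, IsBarrier V ∧
      ((∀ s ∈ V, ∀ t ∈ V, ShiftExt s t → ¬ f s ≤ f t) ∨
       (∀ s ∈ V, ∀ t ∈ V, ShiftExt s t → f s ≤ f t)) := by
  obtain ⟨X, hXM, hXi, hX⟩ := NashWilliams.exists_infinite_subset_forall_hasInitSegIn_or_not
    (goodPairUnions U f) hU.infinite_base
  refine ⟨{b ∈ U | ↑b ⊆ X}, fun b hb => hb.1, hU.restrict hXM hXi, ?_⟩
  have hwitness : ∀ s ∈ {b ∈ U | ↑b ⊆ X}, ∀ t ∈ {b ∈ U | ↑b ⊆ X}, ShiftExt s t →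
      ∃ Y ⊆ X, Y.Infinite ∧ (HasInitSegIn (goodPairUnions U f) Y ↔ f s ≤ f t) := by
    rintro s ⟨hsU, hsX⟩ t ⟨htU, htX⟩ hst
    obtain ⟨Y, hYX, hYi, hY⟩ :=
      exists_natInitSeg_of_subset (by rw [Finset.coe_union]; exact union_subset hsX htX) hXi
    exact ⟨Y, hYX, hYi, hU.hasInitSegIn_goodPairUnions_iff f hsU htU hst hY⟩
  rcases hX with hgood | hbad
  · refine Or.inr fun s hs t ht hst => ?_
    obtain ⟨Y, hYX, hYi, hiff⟩ := hwitness s hs t ht hst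
    exact hiff.1 (hgood Y hYX hYi)
  · refine Or.inl fun s hs t ht hst => ?_
    obtain ⟨Y, hYX, hYi, hiff⟩ := hwitness s hs t ht hst
    exact fun hle => hbad Y hYX hYi (hiff.2 hle)
end

section
/- Suppose D is a barrier and f is a function defined on D into an arbitrary set such that f(d₁) = f(d₂) whenever d₁, d₂ ∈ D and d₁ ◁ d₂. Then f is constant on D: f(d₁) = f(d₂) for every d₁, d₂ ∈ D. -/
universe u v

open Set

/-- If `f` is constant along the shift-extension relation on a barrier `D`, then `f` is
constant on `D`. -/
theorem stmt_18 {S : Type u} (D : Set (Finset ℕ)) (hD : IsBarrier D)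
    (f : Finset ℕ → S)
    (h : ∀ d₁ ∈ D, ∀ d₂ ∈ D, ShiftExt d₁ d₂ → f d₁ = f d₂) :
    ∀ d₁ ∈ D, ∀ d₂ ∈ D, f d₁ = f d₂ := by
  classical
  obtain ⟨hinf, hanti, hbar⟩ := hD
  set base := (⋃ b ∈ D, (↑b : Set ℕ)) with hbase_def
  -- the base is infinite
  have hbase_inf : base.Infinite := by
    by_contra hfin
    rw [Set.not_infinite] at hfin
    have hsub : ∀ s ∈ D, s ⊆ hfin.toFinset := by
      intro s hs x hx
      rw [Set.Finite.mem_toFinset]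
      exact Set.mem_biUnion hs hx
    exact hinf ((hfin.toFinset.powerset.finite_toSet).subset
      (fun s hs => Finset.mem_coe.mpr (Finset.mem_powerset.mpr (hsub s hs))))
  -- barrier elements are nonempty
  have hne : ∀ r ∈ D, r.Nonempty := by
    intro r hr
    rcases Finset.eq_empty_or_nonempty r with he | hne
    · exfalso
      apply hinf
      refine (Set.finite_singleton (∅ : Finset ℕ)).subset (fun s hs => ?_)
      have := hanti r hr s hs (by simp [he])
      simp [← this, he]
    · exact hne
  -- two initial segments of the same set are comparable
  have hcomp : ∀ (r s : Finset ℕ) (X : Set ℕ),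
      NatInitSeg r X → NatInitSeg s X → r ⊆ s ∨ s ⊆ r := by
    intro r s X hr hs
    by_cases hrs : r ⊆ s
    · exact Or.inl hrs
    · right
      obtain ⟨x, hxr, hxs⟩ := Finset.not_subset.mp hrs
      intro y hy
      by_contra hyr
      have hyX : (y : ℕ) ∈ X := hs.1 (Finset.mem_coe.mpr hy)
      have hxX : (x : ℕ) ∈ X := hr.1 (Finset.mem_coe.mpr hxr)
      have h1 : x < y := hr.2 y hyX hyr x hxr
      have h2 : y < x := hs.2 x hxX hxs y hy
      omega
  -- the initial segment of a set lying in D is unique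
  have huniq : ∀ r ∈ D, ∀ s ∈ D, ∀ X : Set ℕ,
      NatInitSeg r X → NatInitSeg s X → r = s := by
    intro r hr s hs X h1 h2
    rcases hcomp r s X h1 h2 with hc | hc
    · exact hanti r hr s hs hc
    · exact (hanti s hs r hr hc).symm
  -- a nonempty initial segment contains the infimum of the set
  have hmin_mem : ∀ r : Finset ℕ, r.Nonempty → ∀ X : Set ℕ,
      NatInitSeg r X → sInf X ∈ r := by
    intro r hrne X hr
    by_contra hmr
    have hXne : X.Nonempty := ⟨r.min' hrne, hr.1 (Finset.mem_coe.mpr (r.min'_mem hrne))⟩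
    have h1 := hr.2 (sInf X) (Nat.sInf_mem hXne) hmr (r.min' hrne) (r.min'_mem hrne)
    have h2 : sInf X ≤ r.min' hrne := Nat.sInf_le (hr.1 (Finset.mem_coe.mpr (r.min'_mem hrne)))
    omega
  -- the shift lemma
  have hshift : ∀ X : Set ℕ, ∀ r ∈ D, NatInitSeg r X →
      ∀ r' ∈ D, NatInitSeg r' (X \ {sInf X}) → ShiftExt r r' := by
    intro X r hrD hr r' hr'D hr'
    set m := sInf X with hm
    have hrne := hne r hrD
    have hmr : m ∈ r := hmin_mem r hrne X hr
    have hmr' : m ∉ r' := by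
      intro hc
      exact (hr'.1 (Finset.mem_coe.mpr hc)).2 rfl
    have hseg : NatInitSeg (r.erase m) (X \ {m}) := by
      constructor
      · intro x hx
        simp only [Finset.coe_erase, Set.mem_diff, Set.mem_singleton_iff] at hx ⊢
        exact ⟨hr.1 hx.1, hx.2⟩
      · intro x hx hxe y hy
        have hxm : x ≠ m := by
          intro hc
          exact hx.2 (by simp [hc])
        have hxr : x ∉ r := fun hxr => hxe (Finset.mem_erase.mpr ⟨hxm, hxr⟩)
        exact hr.2 x hx.1 hxr y (Finset.mem_of_mem_erase hy)
    have hsub : r.erase m ⊆ r' := by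
      rcases hcomp (r.erase m) r' (X \ {m}) hseg hr' with hc | hc
      · exact hc
      · exfalso
        have heq : r' = r := hanti r' hr'D r hrD (hc.trans (Finset.erase_subset m r))
        rw [heq] at hmr'
        exact hmr' hmr
    have hneq : r.erase m ≠ r' := by
      intro hEq
      have hc : r' ⊆ r := by rw [← hEq]; exact Finset.erase_subset m r
      have heq : r' = r := hanti r' hr'D r hrD hc
      rw [heq] at hmr'
      exact hmr' hmr
    refine ⟨m, hmr, ?_, ?_, hsub, hneq, ?_⟩
    · intro x hx
      exact Nat.sInf_le (hr.1 (Finset.mem_coe.mpr hx))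
    · intro y hy
      have hyX := hr'.1 (Finset.mem_coe.mpr hy)
      have h1 := Nat.sInf_le hyX.1
      have h2 : y ≠ m := by
        intro hc
        exact hyX.2 (by simp [hc])
      omega
    · intro x hx hxe y hy
      have hxX := hr'.1 (Finset.mem_coe.mpr hx)
      have hxm : x ≠ m := by
        intro hc
        exact hxX.2 (by simp [hc])
      have hxr : x ∉ r := fun hxr => hxe (Finset.mem_erase.mpr ⟨hxm, hxr⟩)
      exact hr.2 x hxX.1 hxr y (Finset.mem_of_mem_erase hy)
  -- key: f agrees on initial segments of X and of X minus its minimum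
  have hkey : ∀ X : Set ℕ, ∀ r ∈ D, NatInitSeg r X →
      ∀ r' ∈ D, NatInitSeg r' (X \ {sInf X}) → f r = f r' :=
    fun X r hrD hr r' hr'D hr' => h r hrD r' hr'D (hshift X r hrD hr r' hr'D hr')
  -- descent: strip a finite set below an infinite tail
  have hstep : ∀ n : ℕ, ∀ d : Finset ℕ, d.card = n → ∀ T : Set ℕ, T.Infinite → T ⊆ base →
      ↑d ⊆ base → (∀ x ∈ d, ∀ y ∈ T, x < y) →
      ∀ r ∈ D, NatInitSeg r (↑d ∪ T) → ∀ r' ∈ D, NatInitSeg r' T → f r = f r' := by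
    intro n
    induction n with
    | zero =>
      intro d hcard T hTi hTb hdb hlt r hrD hr r' hr'D hr'
      have hd : d = ∅ := Finset.card_eq_zero.mp hcard
      subst hd
      have hU : ((↑(∅ : Finset ℕ) : Set ℕ) ∪ T) = T := by simp
      rw [hU] at hr
      rw [huniq r hrD r' hr'D T hr hr']
    | succ n ih =>
      intro d hcard T hTi hTb hdb hlt r hrD hr r' hr'D hr'
      have hdne : d.Nonempty := Finset.card_pos.mp (by omega)
      set m := d.min' hdne with hm
      have hmd : m ∈ d := d.min'_mem hdne
      have hsInf : sInf ((↑d : Set ℕ) ∪ T) = m := by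
        have hXne : ((↑d : Set ℕ) ∪ T).Nonempty := ⟨m, Or.inl (Finset.mem_coe.mpr hmd)⟩
        have h1 : sInf ((↑d : Set ℕ) ∪ T) ≤ m := Nat.sInf_le (Or.inl (Finset.mem_coe.mpr hmd))
        have h2 : m ≤ sInf ((↑d : Set ℕ) ∪ T) := by
          rcases Nat.sInf_mem hXne with hmem | hmem
          · exact d.min'_le _ (Finset.mem_coe.mp hmem)
          · exact le_of_lt (hlt m hmd _ hmem)
        omega
      have hEq : ((↑d : Set ℕ) ∪ T) \ {m} = (↑(d.erase m) : Set ℕ) ∪ T := by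
        ext x
        simp only [Set.mem_diff, Set.mem_union, Finset.coe_erase, Set.mem_singleton_iff,
          Finset.mem_coe]
        constructor
        · rintro ⟨hx | hx, hxm⟩
          · exact Or.inl ⟨hx, hxm⟩
          · exact Or.inr hx
        · rintro (⟨hx, hxm⟩ | hx)
          · exact ⟨Or.inl hx, hxm⟩
          · exact ⟨Or.inr hx, (hlt m hmd x hx).ne'⟩
      have hXsub : ((↑(d.erase m) : Set ℕ) ∪ T) ⊆ base := by
        rintro x (hx | hx)
        · exact hdb (Finset.coe_subset.mpr (Finset.erase_subset m d) hx)
        · exact hTb hx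
      have hXinf : ((↑(d.erase m) : Set ℕ) ∪ T).Infinite :=
        hTi.mono Set.subset_union_right
      obtain ⟨r'', hr''D, hr''⟩ := hbar _ hXsub hXinf
      have hstep1 : f r = f r'' := by
        apply hkey ((↑d : Set ℕ) ∪ T) r hrD hr r'' hr''D
        rw [hsInf, hEq]
        exact hr''
      have hstep2 : f r'' = f r' := by
        apply ih (d.erase m) (by rw [Finset.card_erase_of_mem hmd, hcard]; omega) T hTi hTb
          (fun x hx => hdb (Finset.coe_subset.mpr (Finset.erase_subset m d) hx))
          (fun x hx y hy => hlt x (Finset.mem_of_mem_erase hx) y hy)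
          r'' hr''D hr'' r' hr'D hr'
      rw [hstep1, hstep2]
  -- main argument
  intro d₁ hd₁ d₂ hd₂
  set N := (d₁ ∪ d₂).sup id with hN
  set T := base \ Set.Iic N with hT
  have hTinf : T.Infinite := hbase_inf.diff (Set.finite_Iic N)
  have hTb : T ⊆ base := Set.diff_subset
  have hdb : ∀ d : Finset ℕ, d ∈ D → (↑d : Set ℕ) ⊆ base :=
    fun d hd x hx => Set.mem_biUnion hd hx
  have hlt : ∀ d : Finset ℕ, d ⊆ d₁ ∪ d₂ → ∀ x ∈ d, ∀ y ∈ T, x < y := by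
    intro d hd x hx y hy
    have h1 : x ≤ N := Finset.le_sup (f := id) (hd hx)
    have h2 : ¬ y ≤ N := hy.2
    omega
  have hseg : ∀ d : Finset ℕ, d ⊆ d₁ ∪ d₂ → NatInitSeg d ((↑d : Set ℕ) ∪ T) := by
    intro d hd
    constructor
    · exact Set.subset_union_left
    · intro x hx hxd y hy
      rcases hx with hx | hx
      · exact absurd (Finset.mem_coe.mp hx) hxd
      · exact hlt d hd y hy x hx
  obtain ⟨rT, hrTD, hrT⟩ := hbar T hTb hTinf
  have e1 : f d₁ = f rT :=
    hstep d₁.card d₁ rfl T hTinf hTb (hdb d₁ hd₁) (hlt d₁ Finset.subset_union_left)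
      d₁ hd₁ (hseg d₁ Finset.subset_union_left) rT hrTD hrT
  have e2 : f d₂ = f rT :=
    hstep d₂.card d₂ rfl T hTinf hTb (hdb d₂ hd₂) (hlt d₂ Finset.subset_union_right)
      d₂ hd₂ (hseg d₂ Finset.subset_union_right) rT hrTD hrT
  rw [e1, e2]
end
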